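/- arXiv:1610.09993 — 4 statements merged into one kernel-verified Lean document; each statement's English description precedes it below -/
import Mathlib

section
/- Let t be a nonnegative integer with t < n and |E| < (t² + 3t)/2. Then P(S^n_{r+}) is closed for every integer r with t ≤ r ≤ n if and only if ℒ and ℒ^c are disconnected in G. -/
/-
An edge `uw` with `u` looped and `w` not looped destroys closedness: the rank-one matrices
`vvᵀ`, `v = ε e_u + ε⁻¹ e_w`, have observed entries `X_uu = ε² → 0` and `X_uw = 1` (the exploding
entry `X_ww` is not observed), while no PSD matrix has `X_uu = 0 ≠ X_uw`.

Conversely, if no edge joins `ℒ` and `ℒᶜ`, the observed entries among unlooped vertices are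
unconstrained (a sum of rank-one PSD matrices realises any values there without touching `ℒ`), and
those among looped vertices form a closed set, because their observed diagonal bounds every entry
of a PSD matrix supported on `ℒ × ℒ`. Finally, by the Barvinok–Pataki rank reduction, any value of
`P` on the PSD cone is attained at rank `≤ t` as soon as `|E| < (t + 2).choose 2`, so
`P(Sⁿᵣ₊) = P(Sⁿ₊)` for `r ≥ t`.
-/

open Matrix

/-- PSD matrices of rank at most `r`, indexed by a finite type. -/
def psdRank (ι : Type) [Fintype ι] [DecidableEq ι] (r : ℕ) : Set (Matrix ι ι ℝ) :=
  {X | X.PosSemidef ∧ X.rank ≤ r}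

/-- Coordinate projection onto the entries indexed by `E`. -/
def proj {n : ℕ} (E : Set (Fin n × Fin n)) (X : Matrix (Fin n) (Fin n) ℝ) : E → ℝ :=
  fun p => X p.1.1 p.1.2

/-- The simple graph underlying the index set `E` (loops discarded). -/
def graphOf {n : ℕ} (E : Set (Fin n × Fin n)) : SimpleGraph (Fin n) where
  Adj i j := i ≠ j ∧ ((i, j) ∈ E ∨ (j, i) ∈ E)
  symm := by
    refine ⟨?_⟩
    intro i j h
    exact ⟨h.1.symm, h.2.symm⟩
  loopless := by
    refine ⟨?_⟩
    intro i h
    exact h.1 rfl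

open Filter Topology Unitary

namespace Matrix

section Entries

variable {m : Type*} {X : Matrix m m ℝ}

lemma PosSemidef.apply_symm (hX : X.PosSemidef) (i j : m) : X j i = X i j := by
  simpa using hX.1.apply i j

lemma PosSemidef.apply_mul_apply_le (hX : X.PosSemidef) (i j : m) :
    X i j * X j i ≤ X i i * X j j := by
  have := (hX.submatrix ![i, j]).det_nonneg
  rw [det_fin_two] at this
  simp only [submatrix_apply, Matrix.cons_val_zero, Matrix.cons_val_one] at this
  linarith

lemma PosSemidef.apply_eq_zero_of_diag_eq_zero (hX : X.PosSemidef) {i : m} (hi : X i i = 0)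
    (j : m) : X i j = 0 := by
  have := hX.apply_mul_apply_le i j
  rw [hi, zero_mul, hX.apply_symm i j, ← sq] at this
  exact pow_eq_zero_iff two_ne_zero |>.mp (le_antisymm this (sq_nonneg _))

lemma PosSemidef.abs_apply_le (hX : X.PosSemidef) {i j : m} {R : ℝ} (hi : X i i ≤ R)
    (hj : X j j ≤ R) : |X i j| ≤ R := by
  have h := hX.apply_mul_apply_le i j
  rw [hX.apply_symm i j] at h
  have := hX.diag_nonneg (i := i)
  have := hX.diag_nonneg (i := j)
  exact abs_le_of_sq_le_sq' (by nlinarith) (by linarith) |> abs_le.mpr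

lemma isClosed_setOf_posSemidef [Fintype m] : IsClosed {X : Matrix m m ℝ | X.PosSemidef} := by
  simp only [posSemidef_iff_dotProduct_mulVec, Set.ofPred_and, Set.ofPred_forall]
  refine (isClosed_eq continuous_id.matrix_conjTranspose continuous_id).inter
    (isClosed_iInter fun x => isClosed_le continuous_const ?_)
  fun_prop

end Entries

variable {m : Type*} [Fintype m] [DecidableEq m] {X : Matrix m m ℝ}

lemma PosSemidef.exists_eq_mul_conjTranspose_fin_rank (hX : X.PosSemidef) :
    ∃ Q : Matrix m (Fin X.rank) ℝ, X = Q * Qᴴ := by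
  set ev := hX.1.eigenvalues
  set U : Matrix m m ℝ := (hX.1.eigenvectorUnitary : Matrix m m ℝ)
  let e : Fin X.rank ≃ {i // ev i ≠ 0} :=
    Fintype.equivFinOfCardEq hX.1.rank_eq_card_non_zero_eigs.symm |>.symm
  refine ⟨of fun k j => U k (e j) * √(ev (e j)), ?_⟩
  ext k l
  calc X k l = ∑ i, U k i * ev i * U l i := by
        conv_lhs => rw [hX.1.spectral_theorem, conjStarAlgAut_apply]
        rw [mul_apply]
        simp [U, ev]
    _ = ∑ i : {i // ev i ≠ 0}, U k i * ev i * U l i := by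
        rw [← Fintype.sum_subtype_add_sum_subtype (fun i => ev i ≠ 0), add_eq_left]
        exact Finset.sum_eq_zero fun i _ => by simp [of_not_not i.2]
    _ = ∑ j, U k (e j) * ev (e j) * U l (e j) := (e.sum_comp _).symm
    _ = _ := by
        simp only [mul_apply, conjTranspose_apply, of_apply, star_trivial]
        refine Finset.sum_congr rfl fun j _ => ?_
        rw [mul_mul_mul_comm, Real.mul_self_sqrt (hX.eigenvalues_nonneg _)]
        ring

lemma IsHermitian.exists_posSemidef_one_sub_smul_rank_lt {Y : Matrix m m ℝ} (hY : Y.IsHermitian)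
    (hY0 : Y ≠ 0) : ∃ c : ℝ, (1 - c • Y).PosSemidef ∧ (1 - c • Y).rank < Fintype.card m := by
  set μ := hY.eigenvalues
  have hμ : μ ≠ 0 := hY.eigenvalues_eq_zero_iff.not.mpr hY0
  have : Nonempty m := let ⟨i, _⟩ := Function.ne_iff.mp hμ; ⟨i⟩
  obtain ⟨i₀, hi₀⟩ : ∃ i₀, ∀ i, |μ i| ≤ |μ i₀| := Finite.exists_max fun i => |μ i|
  have hμ₀ : μ i₀ ≠ 0 := by
    intro h
    refine hμ (funext fun i => abs_nonpos_iff.mp ?_)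
    simpa [h] using hi₀ i
  -- `1 - c • Y` has eigenvalues `1 - μ i / μ i₀ ≥ 0`, and the one at `i₀` vanishes.
  set d : m → ℝ := fun i => 1 - (μ i₀)⁻¹ * μ i
  have hd : 1 - (μ i₀)⁻¹ • Y = conjStarAlgAut ℝ _ hY.eigenvectorUnitary (diagonal d) := by
    conv_lhs => rw [hY.spectral_theorem]
    rw [← map_one (conjStarAlgAut ℝ _ hY.eigenvectorUnitary), ← map_smul, ← map_sub]
    congr 1
    ext i j
    rcases eq_or_ne i j with rfl | hij
    · simp [d, μ]
    · simp [d, hij]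
  refine ⟨(μ i₀)⁻¹, ?_, ?_⟩
  · rw [hd, conjStarAlgAut_apply, Unitary.isUnit_coe.posSemidef_star_right_conjugate_iff,
      posSemidef_diagonal_iff]
    intro i
    have : |(μ i₀)⁻¹ * μ i| ≤ 1 := by
      rw [abs_mul, abs_inv]
      exact inv_mul_le_one_of_le₀ (hi₀ i) (abs_nonneg _)
    linarith [le_abs_self ((μ i₀)⁻¹ * μ i)]
  · calc (1 - (μ i₀)⁻¹ • Y).rank = (diagonal d).rank := by
          rw [hd, conjStarAlgAut_apply, ← Unitary.coe_star]
          simp [-isUnit_iff_ne_zero, -Unitary.coe_star]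
      _ < Fintype.card m := by
          rw [rank_diagonal]
          exact Fintype.card_subtype_lt (x := i₀) (by simp [d, hμ₀])

/-- The sum of the rank-one matrices `(e_a + y e_b)(e_a + y e_b)ᵀ` over `(a, b) ∈ F`; since `F`
contains no transposed pair, the `(a, b)` entry only receives `y (a, b)`. -/
lemma exists_posSemidef_apply_eq_of_offDiag (F : Finset (m × m))
    (hF : ∀ p ∈ F, p.1 ≠ p.2 ∧ p.swap ∉ F) (y : m × m → ℝ) :
    ∃ N : Matrix m m ℝ, N.PosSemidef ∧ (∀ p ∈ F, N p.1 p.2 = y p) ∧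
      ∀ i j, (∀ p ∈ F, p.1 ≠ i ∧ p.2 ≠ i) → N i j = 0 := by
  set u : m × m → m → ℝ := fun p => Pi.single p.1 1 + Pi.single p.2 (y p)
  have hu : ∀ p x, p.1 ≠ x → p.2 ≠ x → u p x = 0 := by
    intro p x h₁ h₂
    simp [u, h₁.symm, h₂.symm]
  have hN : ∀ i j, (∑ p ∈ F, vecMulVec (u p) (u p)) i j = ∑ p ∈ F, u p i * u p j := by
    intro i j
    simp [sum_apply, vecMulVec_apply]
  refine ⟨∑ p ∈ F, vecMulVec (u p) (u p),
    posSemidef_sum F fun p _ => by simpa using posSemidef_vecMulVec_self_star (u p), ?_, ?_⟩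
  · intro q hq
    rw [hN, Finset.sum_eq_single q]
    · simp [u, (hF q hq).1, (hF q hq).1.symm]
    · intro p hp hpq
      by_contra h
      obtain ⟨h₁, h₂⟩ := mul_ne_zero_iff.mp h
      have e₁ : p.1 = q.1 ∨ p.2 = q.1 := by
        by_contra! h'
        exact h₁ (hu p _ h'.1 h'.2)
      have e₂ : p.1 = q.2 ∨ p.2 = q.2 := by
        by_contra! h'
        exact h₂ (hu p _ h'.1 h'.2)
      obtain ⟨hq₁, hq₂⟩ := hF q hq
      rcases e₁ with e₁ | e₁ <;> rcases e₂ with e₂ | e₂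
      · exact hq₁ (e₁.symm.trans e₂)
      · exact hpq (Prod.ext e₁ e₂)
      · exact hq₂ ((Prod.ext e₂.symm e₁.symm : q.swap = p) ▸ hp)
      · exact hq₁ (e₁.symm.trans e₂)
    · exact fun h => absurd hq h
  · intro i j hi
    rw [hN]
    exact Finset.sum_eq_zero fun p hp => by
      rw [hu p i (hi p hp).1 (hi p hp).2, zero_mul]

section RankReduction

variable {V : Type*} [AddCommGroup V] [Module ℝ V] [FiniteDimensional ℝ V]

lemma PosSemidef.exists_rank_lt_map_eq (L : Matrix m m ℝ →ₗ[ℝ] V) (hX : X.PosSemidef)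
    (hL : Module.finrank ℝ V < (X.rank + 1).choose 2) :
    ∃ Z : Matrix m m ℝ, Z.PosSemidef ∧ Z.rank < X.rank ∧ L Z = L X := by
  obtain ⟨Q, hQ⟩ := hX.exists_eq_mul_conjTranspose_fin_rank
  let Φ : (Sym2 (Fin X.rank) → ℝ) →ₗ[ℝ] V := L ∘ₗ
    { toFun f := Q * of (fun i j => f s(i, j)) * Qᴴ
      map_add' f g := by rw [← Matrix.add_mul, ← Matrix.mul_add]; rfl
      map_smul' c f := by rw [RingHom.id_apply, ← Matrix.smul_mul, ← Matrix.mul_smul]; rfl }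
  -- Symmetric matrices on `Fin X.rank`, coordinatised by `Sym2`, outnumber the dimension of `V`.
  obtain ⟨f, hf, hf0⟩ := Submodule.exists_mem_ne_zero_of_ne_bot <|
    Φ.ker_ne_bot_of_finrank_lt <| by
      rwa [Module.finrank_fintype_fun_eq_card, Sym2.card, Fintype.card_fin]
  set Y : Matrix (Fin X.rank) (Fin X.rank) ℝ := of fun i j => f s(i, j)
  have hY : Y.IsHermitian := by
    ext i j
    simp [Y, Sym2.eq_swap]
  have hY0 : Y ≠ 0 := by
    refine fun h => hf0 (funext fun z => ?_)
    induction z using Sym2.ind with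
    | _ i j => exact congrFun (congrFun h i) j
  obtain ⟨c, hc, hrank⟩ := hY.exists_posSemidef_one_sub_smul_rank_lt hY0
  refine ⟨Q * (1 - c • Y) * Qᴴ, hc.mul_mul_conjTranspose_same Q, ?_, ?_⟩
  · calc (Q * (1 - c • Y) * Qᴴ).rank ≤ (1 - c • Y).rank :=
          (rank_mul_le_left _ _).trans (rank_mul_le_right _ _)
      _ < X.rank := hrank.trans_eq (Fintype.card_fin _)
  · have hΦ : L (Q * Y * Qᴴ) = 0 := hf
    rw [Matrix.mul_sub, Matrix.sub_mul, Matrix.mul_one, ← hQ, Matrix.mul_smul, Matrix.smul_mul,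
      map_sub, map_smul, hΦ, smul_zero, sub_zero]

lemma PosSemidef.exists_rank_le_map_eq (L : Matrix m m ℝ →ₗ[ℝ] V) {t : ℕ}
    (hL : Module.finrank ℝ V < (t + 2).choose 2) (hX : X.PosSemidef) :
    ∃ Z : Matrix m m ℝ, Z.PosSemidef ∧ Z.rank ≤ t ∧ L Z = L X := by
  induction hk : X.rank using Nat.strong_induction_on generalizing X with
  | _ k ih =>
    by_cases hkt : k ≤ t
    · exact ⟨X, hX, hk ▸ hkt, rfl⟩
    obtain ⟨Z, hZ, hZX, hLZ⟩ := hX.exists_rank_lt_map_eq L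
      (hL.trans_le (hk ▸ Nat.choose_le_choose 2 (by omega)))
    obtain ⟨W, hW, hWt, hLW⟩ := ih _ (hk ▸ hZX) hZ rfl
    exact ⟨W, hW, hWt, hLW.trans hLZ⟩

end RankReduction

end Matrix

section Proj

variable {n : ℕ}

section

variable (E : Set (Fin n × Fin n))

lemma proj_add (X Y : Matrix (Fin n) (Fin n) ℝ) : proj E (X + Y) = proj E X + proj E Y := rfl

lemma proj_smul (c : ℝ) (X : Matrix (Fin n) (Fin n) ℝ) : proj E (c • X) = c • proj E X := rfl

def projₗ : Matrix (Fin n) (Fin n) ℝ →ₗ[ℝ] (E → ℝ) where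
  toFun := proj E
  map_add' := proj_add E
  map_smul' := proj_smul E

lemma continuous_proj : Continuous (proj E) :=
  continuous_pi fun p => (continuous_apply p.1.2).comp (continuous_apply p.1.1)

end

lemma not_isClosed_proj_image_psdRank {E : Set (Fin n × Fin n)} {u w : Fin n}
    (huw : u ≠ w) (hu : (u, u) ∈ E) (hw : (w, w) ∉ E) (hE : (u, w) ∈ E ∨ (w, u) ∈ E) {r : ℕ}
    (hr : 1 ≤ r) : ¬ IsClosed (proj E '' psdRank (Fin n) r) := by
  intro hcl
  set a : Fin n → ℝ := Pi.single u 1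
  set b : Fin n → ℝ := Pi.single w 1
  set y := proj E (vecMulVec a b + vecMulVec b a)
  have hbb : proj E (vecMulVec b b) = 0 := by
    ext p
    by_contra h
    simp only [proj, vecMulVec_apply, b, Pi.zero_apply, mul_ne_zero_iff, ne_eq,
      Pi.single_apply, ite_eq_right_iff, not_forall] at h
    obtain ⟨⟨h₁, -⟩, ⟨h₂, -⟩⟩ := h
    exact hw ((Prod.ext h₁ h₂ : p.1 = (w, w)) ▸ p.2)
  have hmem : ∀ ε : ℝ, ε ≠ 0 →
      ε ^ 2 • proj E (vecMulVec a a) + y ∈ proj E '' psdRank (Fin n) r := by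
    intro ε hε
    refine ⟨vecMulVec (ε • a + ε⁻¹ • b) (ε • a + ε⁻¹ • b),
      ⟨by simpa using posSemidef_vecMulVec_self_star (ε • a + ε⁻¹ • b),
        (rank_vecMulVec_le _ _).trans hr⟩, ?_⟩
    have : vecMulVec (ε • a + ε⁻¹ • b) (ε • a + ε⁻¹ • b) =
        ε ^ 2 • vecMulVec a a + (vecMulVec a b + vecMulVec b a) + ε⁻¹ ^ 2 • vecMulVec b b := by
      ext i j
      simp only [vecMulVec_apply, Pi.add_apply, Pi.smul_apply, smul_eq_mul, Matrix.add_apply,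
        Matrix.smul_apply]
      field_simp
      ring
    rw [this, proj_add, proj_add, proj_smul, proj_smul, hbb, smul_zero, add_zero]
  have hlim : Tendsto (fun ε : ℝ => ε ^ 2 • proj E (vecMulVec a a) + y) (𝓝[≠] 0) (𝓝 y) := by
    refine tendsto_nhdsWithin_of_tendsto_nhds ?_
    simpa using ((continuous_pow 2).smul continuous_const).add continuous_const
      |>.tendsto (0 : ℝ) (f := fun ε : ℝ => ε ^ 2 • proj E (vecMulVec a a) + y)
  obtain ⟨X, ⟨hX, -⟩, hXy⟩ := hcl.mem_of_tendsto hlim (eventually_nhdsWithin_of_forall hmem)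
  have hXuu : X u u = 0 := by
    simpa [y, proj, vecMulVec_apply, a, b, huw, huw.symm] using congrFun hXy ⟨(u, u), hu⟩
  have hXuw := hX.apply_eq_zero_of_diag_eq_zero hXuu w
  rcases hE with h | h
  · simpa [y, proj, vecMulVec_apply, a, b, huw, huw.symm, hXuw] using congrFun hXy ⟨(u, w), h⟩
  · simpa [y, proj, vecMulVec_apply, a, b, huw, huw.symm, hX.apply_symm u w, hXuw] using
      congrFun hXy ⟨(w, u), h⟩

lemma isClosed_proj_image_posSemidef {F : Set (Fin n × Fin n)}
    (hF : ∀ p ∈ F, (p.1, p.1) ∈ F ∧ (p.2, p.2) ∈ F) :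
    IsClosed (proj F '' {X | X.PosSemidef}) := by
  classical
  refine isClosed_of_closure_subset fun y hy => ?_
  obtain ⟨ys, hys, hlim⟩ := mem_closure_iff_seq_limit.mp hy
  choose X hX hXy using hys
  -- Compressing to the looped indices keeps the observed entries and bounds all the others.
  set D : Matrix (Fin n) (Fin n) ℝ := diagonal fun i => if (i, i) ∈ F then 1 else 0
  have hD : ∀ (A : Matrix (Fin n) (Fin n) ℝ) i j,
      (D * A * D) i j = if (i, i) ∈ F ∧ (j, j) ∈ F then A i j else 0 := by
    intro A i j
    by_cases hi : (i, i) ∈ F <;> by_cases hj : (j, j) ∈ F <;> simp [D, hi, hj]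
  set X' : ℕ → Matrix (Fin n) (Fin n) ℝ := fun k => D * X k * D
  have hX' : ∀ k, (X' k).PosSemidef := fun k => by
    simpa [D] using (hX k).mul_mul_conjTranspose_same D
  have hX'y : ∀ k, proj F (X' k) = ys k := fun k => by
    rw [← hXy k]
    ext p
    simp [proj, X', hD, (hF p.1 p.2).1, (hF p.1 p.2).2]
  obtain ⟨R, hR⟩ := isBounded_iff_forall_norm_le.mp (Metric.isBounded_range_of_tendsto ys hlim)
  have hbound : ∀ k i j, |X' k i j| ≤ R := by
    intro k i j
    have hdiag : ∀ l, (l, l) ∈ F → X' k l l ≤ R := fun l hl =>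
      calc X' k l l = ys k ⟨(l, l), hl⟩ := congrFun (hX'y k) ⟨(l, l), hl⟩
        _ ≤ ‖ys k‖ := (le_abs_self _).trans (norm_le_pi_norm (ys k) _)
        _ ≤ R := hR _ (Set.mem_range_self k)
    by_cases hij : (i, i) ∈ F ∧ (j, j) ∈ F
    · exact (hX' k).abs_apply_le (hdiag i hij.1) (hdiag j hij.2)
    · rw [show X' k i j = 0 by simp [X', hD, hij], abs_zero]
      exact (norm_nonneg _).trans (hR _ (Set.mem_range_self 0))
  have hK : IsCompact
      (Set.univ.pi fun _ : Fin n => Set.univ.pi fun _ : Fin n => Set.Icc (-R) R) :=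
    isCompact_univ_pi fun _ => isCompact_univ_pi fun _ => isCompact_Icc
  obtain ⟨Z, -, φ, hφ, hZ⟩ := hK.tendsto_subseq (x := fun k => of.symm (X' k))
    fun k => Set.mem_univ_pi.mpr fun i => Set.mem_univ_pi.mpr fun j => abs_le.mp (hbound k i j)
  replace hZ : Tendsto (X' ∘ φ) atTop (𝓝 (of Z)) := hZ
  refine ⟨of Z, isClosed_setOf_posSemidef.mem_of_tendsto hZ (.of_forall fun k => hX' (φ k)), ?_⟩
  refine tendsto_nhds_unique ((continuous_proj F).continuousAt.tendsto.comp hZ) ?_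
  simpa [Function.comp_def, hX'y] using hlim.comp hφ.tendsto_atTop

lemma proj_image_psdRank_eq {E : Finset (Fin n × Fin n)} {t r : ℕ}
    (hcard : E.card < (t + 2).choose 2) (htr : t ≤ r) :
    proj (↑E : Set (Fin n × Fin n)) '' psdRank (Fin n) r =
      proj (↑E : Set (Fin n × Fin n)) '' {X | X.PosSemidef} := by
  refine subset_antisymm (Set.image_mono fun _ hX => hX.1) ?_
  rintro _ ⟨X, hX, rfl⟩
  obtain ⟨Z, hZ, hZt, hZX⟩ := hX.exists_rank_le_map_eq (projₗ ↑E) (t := t) <| by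
    simpa [Module.finrank_fintype_fun_eq_card] using hcard
  exact ⟨Z, ⟨hZ, hZt.trans htr⟩, hZX⟩

lemma proj_image_posSemidef_eq_preimage {E : Finset (Fin n × Fin n)}
    (hup : ∀ p ∈ E, p.1 ≤ p.2) (hloop : ∀ p ∈ E, ((p.1, p.1) ∈ E ↔ (p.2, p.2) ∈ E)) :
    proj (↑E : Set (Fin n × Fin n)) '' {X | X.PosSemidef} =
      (fun y (p : {p | p ∈ E ∧ (p.1, p.1) ∈ E}) => y ⟨p.1, p.2.1⟩) ⁻¹'
        (proj {p | p ∈ E ∧ (p.1, p.1) ∈ E} '' {X | X.PosSemidef}) := by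
  classical
  refine subset_antisymm (Set.image_subset_iff.mpr fun X hX => ⟨X, hX, rfl⟩) ?_
  rintro y ⟨X, hX, hXy⟩
  set F := E.filter fun p => (p.1, p.1) ∉ E
  have hF : ∀ p ∈ F, p.1 ≠ p.2 ∧ p.swap ∉ F := by
    intro p hp
    obtain ⟨hpE, hp₁⟩ := Finset.mem_filter.mp hp
    have hne : p.1 ≠ p.2 := fun h => hp₁ ((Prod.ext rfl h : (p.1, p.1) = p) ▸ hpE)
    exact ⟨hne, fun hs => hne ((hup p hpE).antisymm (hup _ (Finset.mem_filter.mp hs).1))⟩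
  obtain ⟨N, hN, hNF, hN0⟩ := exists_posSemidef_apply_eq_of_offDiag F hF
    fun p => if h : p ∈ E then y ⟨p, h⟩ - X p.1 p.2 else 0
  refine ⟨X + N, hX.add hN, funext fun p => ?_⟩
  by_cases hp : (p.1.1, p.1.1) ∈ E
  · have hNp : N p.1.1 p.1.2 = 0 := hN0 _ _ fun q hq => by
      obtain ⟨hqE, hq₁⟩ := Finset.mem_filter.mp hq
      exact ⟨fun h => hq₁ (h ▸ hp), fun h => hq₁ ((hloop q hqE).mpr (h ▸ hp))⟩
    simpa [proj, hNp] using congrFun hXy ⟨p.1, p.2, hp⟩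
  · have := hNF p.1 (Finset.mem_filter.mpr ⟨p.2, hp⟩)
    simp only [dif_pos (show p.1 ∈ E from p.2)] at this
    simp [proj, this]

lemma diag_mem_iff_of_not_reachable {E : Set (Fin n × Fin n)}
    (h : ∀ i j : Fin n, (i, i) ∈ E → (j, j) ∉ E → ¬ (graphOf E).Reachable i j)
    {p : Fin n × Fin n} (hp : p ∈ E) : (p.1, p.1) ∈ E ↔ (p.2, p.2) ∈ E := by
  by_cases heq : p.1 = p.2
  · rw [heq]
  have hadj : (graphOf E).Adj p.1 p.2 := ⟨heq, Or.inl hp⟩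
  exact ⟨fun h₁ => by_contra fun h₂ => h _ _ h₁ h₂ hadj.reachable,
    fun h₂ => by_contra fun h₁ => h _ _ h₂ h₁ hadj.symm.reachable⟩

end Proj

theorem stmt1_general (n : ℕ) (E : Finset (Fin n × Fin n))
    (hup : ∀ p ∈ E, p.1 ≤ p.2)
    (t : ℕ) (htn : t < n) (hcard : (E.card : ℝ) < ((t : ℝ) ^ 2 + 3 * t) / 2) :
    (∀ r : ℕ, t ≤ r → r ≤ n →
        IsClosed (proj (↑E : Set (Fin n × Fin n)) '' psdRank (Fin n) r)) ↔
      (∀ i j : Fin n, (i, i) ∈ E → (j, j) ∉ E →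
        ¬ (graphOf (↑E : Set (Fin n × Fin n))).Reachable i j) := by
  constructor
  · intro hcl i j hi hj ⟨walk⟩
    obtain ⟨d, -, hd₁, hd₂⟩ := walk.exists_boundary_dart {v | (v, v) ∈ E} hi hj
    exact not_isClosed_proj_image_psdRank d.adj.1 hd₁ hd₂ d.adj.2 (by omega)
      (hcl n htn.le le_rfl)
  · intro hdisc r htr _
    have hcard' : E.card < (t + 2).choose 2 := by
      have : (E.card : ℝ) < ((t + 2).choose 2 : ℕ) := by
        rw [Nat.cast_choose_two]
        push_cast
        linarith
      exact_mod_cast this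
    have hloop : ∀ p ∈ E, ((p.1, p.1) ∈ E ↔ (p.2, p.2) ∈ E) :=
      fun p hp => diag_mem_iff_of_not_reachable hdisc hp
    rw [proj_image_psdRank_eq hcard' htr, proj_image_posSemidef_eq_preimage hup hloop]
    refine (isClosed_proj_image_posSemidef fun p hp => ?_).preimage (by fun_prop)
    exact ⟨⟨hp.2, hp.2⟩, (hloop p hp.1).mp hp.2, (hloop p hp.1).mp hp.2⟩

/-- If `t` is a nonnegative integer with `t < n` and
`|E| < (t² + 3t)/2`, then `P(Sⁿᵣ₊)` is closed for every integer `r` with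
`t ≤ r ≤ n` if and only if `ℒ` and `ℒᶜ` are disconnected in `G`. -/
theorem stmt1 (n : ℕ) (hn : 2 ≤ n) (E : Finset (Fin n × Fin n))
    (hup : ∀ p ∈ E, p.1 ≤ p.2)
    (t : ℕ) (htn : t < n) (hcard : (E.card : ℝ) < ((t : ℝ) ^ 2 + 3 * t) / 2) :
    (∀ r : ℕ, t ≤ r → r ≤ n →
        IsClosed (proj (↑E : Set (Fin n × Fin n)) '' psdRank (Fin n) r)) ↔
      (∀ i j : Fin n, (i, i) ∈ E → (j, j) ∉ E →
        ¬ (graphOf (↑E : Set (Fin n × Fin n))).Reachable i j) :=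
  stmt1_general n E hup t htn hcard
end

section
/- Let A be an m×m real positive semidefinite matrix and B a p×p real positive semidefinite matrix. Consider all positive semidefinite completions X = [A, Y; Yᵀ, B] ∈ S^{m+p} with Y ∈ ℝ^{m×p} arbitrary. Then the minimum of rank(X) over all such PSD completions equals max{rank A, rank B}, and the maximum of rank(X) over all such PSD completions equals rank A + rank B; both values are attained. -/
/-!
The rank of a PSD completion is squeezed from both sides by elementary facts: `A` and `B` are
principal submatrices of it, and writing it as `S * Sᴴ` with `S = [S₁; S₂]` gives
`A = S₁ * S₁ᴴ`, `B = S₂ * S₂ᴴ`, so its rank is `rank S ≤ rank S₁ + rank S₂ = rank A + rank B`.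
Both bounds are attained by gluing factorizations `A = C * Cᴴ`, `B = D * Dᴴ`: the block-diagonal
completion has rank `rank A + rank B`, and if `C` and `D` are given the same number
`max (rank A) (rank B)` of columns (possible since a PSD matrix of rank `r` factors through
`r` columns, by the spectral theorem), the completion `[C; D] * [C; D]ᴴ` has at most that rank.
-/

open Matrix Module
open scoped ComplexOrder

theorem Submodule.finrank_prod_eq_add {K M M₂ : Type*} [DivisionRing K] [AddCommGroup M]
    [Module K M] [AddCommGroup M₂] [Module K M₂] (p : Submodule K M) (q : Submodule K M₂)
    [FiniteDimensional K p] [FiniteDimensional K q] :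
    finrank K (p.prod q) = finrank K p + finrank K q := by
  have hinj : Function.Injective (p.subtype.prodMap q.subtype) :=
    Prod.map_injective.2 ⟨p.injective_subtype, q.injective_subtype⟩
  rw [← Module.finrank_prod, ← LinearMap.finrank_range_of_inj hinj, LinearMap.range_prodMap,
    Submodule.range_subtype, Submodule.range_subtype]

namespace Matrix

section Blocks

variable {K : Type*} [Field K] {m₁ m₂ n₁ n₂ : Type*} [Fintype n₁] [Fintype n₂]

theorem mulVecLin_fromRows (A₁ : Matrix m₁ n₁ K) (A₂ : Matrix m₂ n₁ K) :
    (fromRows A₁ A₂).mulVecLin =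
      (LinearEquiv.sumArrowLequivProdArrow m₁ m₂ K K).symm.toLinearMap ∘ₗ
        A₁.mulVecLin.prod A₂.mulVecLin := by
  ext v i
  cases i <;> simp

theorem mulVecLin_fromBlocks_zero_zero (A : Matrix m₁ n₁ K) (D : Matrix m₂ n₂ K) :
    (fromBlocks A 0 0 D).mulVecLin =
      (LinearEquiv.sumArrowLequivProdArrow m₁ m₂ K K).symm.toLinearMap ∘ₗ
        A.mulVecLin.prodMap D.mulVecLin ∘ₗ
          (LinearEquiv.sumArrowLequivProdArrow n₁ n₂ K K).toLinearMap := by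
  ext v i
  cases i <;> simp [fromBlocks_mulVec] <;> rfl

theorem rank_fromRows_le [Finite m₁] [Finite m₂] (A₁ : Matrix m₁ n₁ K) (A₂ : Matrix m₂ n₁ K) :
    (fromRows A₁ A₂).rank ≤ A₁.rank + A₂.rank := by
  rw [rank, mulVecLin_fromRows, LinearMap.range_comp, LinearEquiv.finrank_map_eq]
  exact (Submodule.finrank_mono (LinearMap.range_prod_le _ _)).trans_eq
    (Submodule.finrank_prod_eq_add _ _)

theorem rank_fromBlocks_zero_zero (A : Matrix m₁ n₁ K) (D : Matrix m₂ n₂ K) :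
    (fromBlocks A 0 0 D).rank = A.rank + D.rank := by
  rw [rank, mulVecLin_fromBlocks_zero_zero, LinearMap.range_comp, LinearMap.range_comp,
    LinearEquiv.range, Submodule.map_top, LinearEquiv.finrank_map_eq, LinearMap.range_prodMap,
    Submodule.finrank_prod_eq_add]
  rfl

end Blocks

theorem max_rank_le_rank_fromBlocks {R m₁ m₂ n₁ n₂ : Type*} [CommSemiring R] [StrongRankCondition R]
    [Fintype n₁] [Fintype n₂] (A : Matrix m₁ n₁ R) (B : Matrix m₁ n₂ R) (C : Matrix m₂ n₁ R)
    (D : Matrix m₂ n₂ R) : max A.rank D.rank ≤ (fromBlocks A B C D).rank :=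
  max_le ((fromBlocks A B C D).rank_submatrix_le Sum.inl Sum.inl)
    ((fromBlocks A B C D).rank_submatrix_le Sum.inr Sum.inr)

section Factorizations

variable {α : Type*} [Semiring α] [StarRing α] {n ι κ : Type*} [Fintype ι] [Fintype κ]

theorem submatrix_subtype_mul_conjTranspose_submatrix_subtype (E : Matrix n ι α)
    (p : ι → Prop) [DecidablePred p] (hE : ∀ j, ¬p j → ∀ i, E i j = 0) :
    E.submatrix id (Subtype.val : Subtype p → ι) *
      (E.submatrix id (Subtype.val : Subtype p → ι))ᴴ = E * Eᴴ := by
  ext i k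
  rw [mul_apply, mul_apply, ← Fintype.sum_subtype_add_sum_subtype p,
    Fintype.sum_eq_zero (fun j : {j // ¬p j} => E i j * Eᴴ j k)
      fun j => by rw [hE j j.2 i, zero_mul], add_zero]
  rfl

theorem mul_submatrix_one_mul_conjTranspose [DecidableEq κ] (C : Matrix n ι α) {f : ι → κ}
    (hf : Function.Injective f) :
    C * (1 : Matrix κ κ α).submatrix f id * (C * (1 : Matrix κ κ α).submatrix f id)ᴴ =
      C * Cᴴ := by
  classical
  rw [conjTranspose_mul, Matrix.mul_assoc, ← Matrix.mul_assoc _ _ Cᴴ, conjTranspose_submatrix,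
    conjTranspose_one, ← submatrix_mul _ _ _ _ _ Function.bijective_id, Matrix.mul_one,
    submatrix_one _ hf, Matrix.one_mul]

end Factorizations

namespace PosSemidef

variable {𝕜 : Type*} [RCLike 𝕜] {n m p κ : Type*} [Fintype n] [Fintype m] [Fintype p]
  [Fintype κ]

theorem exists_eq_mul_conjTranspose_of_eigenvalues_eq_zero [DecidableEq n] {A : Matrix n n 𝕜}
    (hA : A.PosSemidef) : ∃ E : Matrix n n 𝕜, A = E * Eᴴ ∧
      ∀ j, hA.isHermitian.eigenvalues j = 0 → ∀ i, E i j = 0 := by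
  set ev := hA.isHermitian.eigenvalues
  set U : Matrix n n 𝕜 := (hA.isHermitian.eigenvectorUnitary : Matrix n n 𝕜)
  set D : Matrix n n 𝕜 := diagonal fun j => (√(ev j) : 𝕜)
  have hD : D * Dᴴ = diagonal (RCLike.ofReal ∘ ev) := by
    rw [diagonal_conjTranspose, diagonal_mul_diagonal]
    congr 1; ext j
    simp only [Function.comp_apply, Pi.star_apply, RCLike.star_def, RCLike.conj_ofReal,
      ← RCLike.ofReal_mul]
    exact congrArg _ (Real.mul_self_sqrt (hA.eigenvalues_nonneg j))
  refine ⟨U * D, ?_, fun j hj i => ?_⟩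
  · conv_lhs => rw [hA.isHermitian.spectral_theorem, Unitary.conjStarAlgAut_apply, ← hD]
    rw [conjTranspose_mul, star_eq_conjTranspose, Matrix.mul_assoc, Matrix.mul_assoc,
      Matrix.mul_assoc]
  · rw [mul_diagonal, hj, Real.sqrt_zero, RCLike.ofReal_zero, mul_zero]

theorem exists_eq_mul_conjTranspose_of_rank_le {A : Matrix n n 𝕜} (hA : A.PosSemidef)
    (hrank : A.rank ≤ Fintype.card κ) : ∃ C : Matrix n κ 𝕜, A = C * Cᴴ := by
  classical
  set ev := hA.isHermitian.eigenvalues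
  obtain ⟨E, hAE, hE⟩ := hA.exists_eq_mul_conjTranspose_of_eigenvalues_eq_zero
  obtain ⟨f⟩ : Nonempty ({j // ev j ≠ 0} ↪ κ) :=
    Function.Embedding.nonempty_of_card_le (hA.isHermitian.rank_eq_card_non_zero_eigs ▸ hrank)
  refine ⟨E.submatrix id (Subtype.val : {j // ev j ≠ 0} → n) *
    (1 : Matrix κ κ 𝕜).submatrix f id, ?_⟩
  rw [mul_submatrix_one_mul_conjTranspose _ f.injective,
    submatrix_subtype_mul_conjTranspose_submatrix_subtype _ _ fun j hj => hE j (not_not.1 hj),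
    hAE]

theorem rank_fromBlocks_le {A : Matrix m m 𝕜} {B : Matrix m p 𝕜} {C : Matrix p m 𝕜}
    {D : Matrix p p 𝕜} (h : (fromBlocks A B C D).PosSemidef) :
    (fromBlocks A B C D).rank ≤ A.rank + D.rank := by
  obtain ⟨S, hS⟩ := h.exists_eq_mul_conjTranspose_of_rank_le (rank_le_card_width _)
  rw [← fromRows_toRows S] at hS
  obtain ⟨hA, -, -, hD⟩ := fromBlocks_inj.1 <| hS.trans <| by
    rw [conjTranspose_fromRows_eq_fromCols_conjTranspose, fromRows_mul_fromCols]
  rw [hS, rank_self_mul_conjTranspose, hA, hD, rank_self_mul_conjTranspose,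
    rank_self_mul_conjTranspose]
  exact rank_fromRows_le _ _

theorem fromBlocks_zero_zero {A : Matrix m m 𝕜} {D : Matrix p p 𝕜} (hA : A.PosSemidef)
    (hD : D.PosSemidef) : (fromBlocks A 0 0 D).PosSemidef := by
  obtain ⟨C, rfl⟩ := hA.exists_eq_mul_conjTranspose_of_rank_le (rank_le_card_width A)
  obtain ⟨E, rfl⟩ := hD.exists_eq_mul_conjTranspose_of_rank_le (rank_le_card_width D)
  simpa [fromBlocks_conjTranspose, fromBlocks_multiply] using
    posSemidef_self_mul_conjTranspose (fromBlocks C 0 0 E)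

theorem exists_fromBlocks_posSemidef_rank_eq_max {A : Matrix m m 𝕜} {B : Matrix p p 𝕜}
    (hA : A.PosSemidef) (hB : B.PosSemidef) : ∃ Y : Matrix m p 𝕜,
      (fromBlocks A Y Yᴴ B).PosSemidef ∧ (fromBlocks A Y Yᴴ B).rank = max A.rank B.rank := by
  obtain ⟨C, hC⟩ := hA.exists_eq_mul_conjTranspose_of_rank_le
    (κ := Fin (max A.rank B.rank)) (by simp)
  obtain ⟨D, hD⟩ := hB.exists_eq_mul_conjTranspose_of_rank_le
    (κ := Fin (max A.rank B.rank)) (by simp)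
  have hX : fromBlocks A (C * Dᴴ) (C * Dᴴ)ᴴ B = fromRows C D * (fromRows C D)ᴴ := by
    rw [conjTranspose_fromRows_eq_fromCols_conjTranspose, fromRows_mul_fromCols,
      conjTranspose_mul, conjTranspose_conjTranspose, ← hC, ← hD]
  refine ⟨C * Dᴴ, hX ▸ posSemidef_self_mul_conjTranspose _,
    le_antisymm ?_ (max_rank_le_rank_fromBlocks _ _ _ _)⟩
  rw [hX, rank_self_mul_conjTranspose]
  exact (rank_le_card_width _).trans (by simp)

end PosSemidef

end Matrix

/-- For PSD matrices `A` (of size `m`) and `B` (of size `p`),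
over all PSD completions `[A, Y; Yᵀ, B]`, the minimum rank equals
`max (rank A) (rank B)` and the maximum rank equals `rank A + rank B`;
both values are attained. -/
theorem stmt3 (m p : ℕ) (A : Matrix (Fin m) (Fin m) ℝ) (B : Matrix (Fin p) (Fin p) ℝ)
    (hA : A.PosSemidef) (hB : B.PosSemidef) :
    IsLeast {k : ℕ | ∃ Y : Matrix (Fin m) (Fin p) ℝ,
        (fromBlocks A Y Yᵀ B).PosSemidef ∧ (fromBlocks A Y Yᵀ B).rank = k}
      (max A.rank B.rank) ∧
    IsGreatest {k : ℕ | ∃ Y : Matrix (Fin m) (Fin p) ℝ,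
        (fromBlocks A Y Yᵀ B).PosSemidef ∧ (fromBlocks A Y Yᵀ B).rank = k}
      (A.rank + B.rank) := by
  simp only [← conjTranspose_eq_transpose_of_trivial]
  refine ⟨⟨hA.exists_fromBlocks_posSemidef_rank_eq_max hB, ?_⟩, ⟨?_, ?_⟩⟩
  · rintro _ ⟨Y, -, rfl⟩
    exact max_rank_le_rank_fromBlocks _ _ _ _
  · exact ⟨0, by simpa using hA.fromBlocks_zero_zero hB,
      by simpa using rank_fromBlocks_zero_zero A B⟩
  · rintro _ ⟨Y, hY, rfl⟩
    exact hY.rank_fromBlocks_le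
end

section
/- Let G be a connected loopless graph on at least 2 vertices. Then G is complete bipartite if and only if G contains no triangle and every path of length 3 in G closes into a 4-cycle, i.e., for all distinct vertices v1, v2, v3, v4 with v1v2 ∈ E, v2v3 ∈ E and v3v4 ∈ E one also has v1v4 ∈ E. -/
/-!
For the nontrivial direction pick an edge `ab`. Closing the path `b a u w` shows that every
neighbour of a neighbour of `a` is adjacent to `b` (and symmetrically), so by connectivity every
vertex is adjacent to `a` or to `b`, and by triangle-freeness to exactly one of them. The parts are
the neighbourhoods of `b` and of `a`: an edge inside one part would close a triangle, and closing
the path `u b a v` joins any two vertices of different parts.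
-/

/-- A graph is complete bipartite: the vertices can be partitioned into two
(nonempty) parts so that the edges are exactly the pairs with one endpoint in
each part. -/
def IsCompleteBipartite {V : Type} (G : SimpleGraph V) : Prop :=
  ∃ V1 V2 : Set V, V1.Nonempty ∧ V2.Nonempty ∧ (∀ v, v ∈ V1 ↔ v ∉ V2) ∧
    ∀ u v, G.Adj u v ↔ ((u ∈ V1 ∧ v ∈ V2) ∨ (u ∈ V2 ∧ v ∈ V1))

namespace SimpleGraph

variable {V : Type*} {G : SimpleGraph V}

def ClosesPathsOfLengthThree (G : SimpleGraph V) : Prop :=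
  ∀ v1 v2 v3 v4 : V, v1 ≠ v2 → v1 ≠ v3 → v1 ≠ v4 → v2 ≠ v3 → v2 ≠ v4 → v3 ≠ v4 →
    G.Adj v1 v2 → G.Adj v2 v3 → G.Adj v3 v4 → G.Adj v1 v4

theorem Reachable.mem_of_adj_closed {s : Set V} (hs : ∀ u v, G.Adj u v → u ∈ s → v ∈ s)
    {u v : V} (huv : G.Reachable u v) (hu : u ∈ s) : v ∈ s := by
  obtain ⟨p⟩ := huv
  induction p with
  | nil => exact hu
  | cons hadj _ ih => exact ih (hs _ _ hadj hu)

theorem not_adj_of_not_exists_triangle (htri : ¬ ∃ a b c : V, G.Adj a b ∧ G.Adj a c ∧ G.Adj b c)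
    {u v w : V} (hu : G.Adj u w) (hv : G.Adj v w) : ¬ G.Adj u v :=
  fun huv ↦ htri ⟨u, v, w, huv, hu, hv⟩

namespace ClosesPathsOfLengthThree

variable {a b : V}

theorem adj_or_adj_of_adj_of_adj (hpath : G.ClosesPathsOfLengthThree) (hab : G.Adj a b)
    {u w : V} (hua : G.Adj u a) (huw : G.Adj u w) : G.Adj w a ∨ G.Adj w b := by
  obtain rfl | hwa := eq_or_ne w a
  · exact .inr hab
  obtain rfl | hwb := eq_or_ne w b
  · exact .inl hab.symm
  obtain rfl | hub := eq_or_ne u b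
  · exact .inr huw.symm
  exact .inr (hpath b a u w hab.ne' hub.symm hwb.symm hua.ne' hwa.symm huw.ne
    hab.symm hua.symm huw).symm

theorem adj_or_adj_of_reachable (hpath : G.ClosesPathsOfLengthThree) (hab : G.Adj a b)
    {v : V} (hv : G.Reachable a v) : G.Adj v a ∨ G.Adj v b := by
  refine hv.mem_of_adj_closed (s := {v | G.Adj v a ∨ G.Adj v b}) ?_ (.inr hab)
  rintro u w huw (hua | hub)
  · exact hpath.adj_or_adj_of_adj_of_adj hab hua huw
  · exact (hpath.adj_or_adj_of_adj_of_adj hab.symm hub huw).symm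

theorem adj_of_adj_of_adj (hpath : G.ClosesPathsOfLengthThree)
    (htri : ¬ ∃ a b c : V, G.Adj a b ∧ G.Adj a c ∧ G.Adj b c) (hab : G.Adj a b) {u v : V}
    (hub : G.Adj u b) (hva : G.Adj v a) : G.Adj u v := by
  obtain rfl | hua := eq_or_ne u a
  · exact hva.symm
  obtain rfl | hvb := eq_or_ne v b
  · exact hub
  have huv : u ≠ v := by
    rintro rfl
    exact not_adj_of_not_exists_triangle htri hab hub hva.symm
  exact hpath u b a v hub.ne hua huv hab.ne' hvb.symm hva.ne' hub hab.symm hva.symm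

end ClosesPathsOfLengthThree

end SimpleGraph

namespace IsCompleteBipartite

open SimpleGraph

variable {V : Type} {G : SimpleGraph V}

theorem not_exists_triangle (h : IsCompleteBipartite G) :
    ¬ ∃ a b c : V, G.Adj a b ∧ G.Adj a c ∧ G.Adj b c := by
  obtain ⟨V1, V2, -, -, hpart, hadj⟩ := h
  rintro ⟨a, b, c, hab, hac, hbc⟩
  rw [hadj] at hab hac hbc
  have := hpart a; have := hpart b; have := hpart c
  tauto

theorem closesPathsOfLengthThree (h : IsCompleteBipartite G) : G.ClosesPathsOfLengthThree := by
  obtain ⟨V1, V2, -, -, hpart, hadj⟩ := h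
  intro v1 v2 v3 v4 _ _ _ _ _ _ h12 h23 h34
  rw [hadj] at h12 h23 h34 ⊢
  have := hpart v1; have := hpart v2; have := hpart v3; have := hpart v4
  tauto

theorem of_adj (hconn : G.Connected) (htri : ¬ ∃ a b c : V, G.Adj a b ∧ G.Adj a c ∧ G.Adj b c)
    (hpath : G.ClosesPathsOfLengthThree) {a b : V} (hab : G.Adj a b) : IsCompleteBipartite G := by
  have hside (v : V) : G.Adj v a ∨ G.Adj v b := hpath.adj_or_adj_of_reachable hab (hconn a v)
  refine ⟨{v | G.Adj v b}, {v | G.Adj v a}, ⟨a, hab⟩, ⟨b, hab.symm⟩, fun v ↦ ?_, fun u v ↦ ?_⟩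
  · exact ⟨fun (hvb : G.Adj v b) (hva : G.Adj v a) ↦
      not_adj_of_not_exists_triangle htri hva.symm hvb.symm hab, (hside v).resolve_left⟩
  constructor
  · intro huv
    rcases hside u with hua | hub <;> rcases hside v with hva | hvb
    · exact absurd huv (not_adj_of_not_exists_triangle htri hua hva)
    · exact .inr ⟨hua, hvb⟩
    · exact .inl ⟨hub, hva⟩
    · exact absurd huv (not_adj_of_not_exists_triangle htri hub hvb)
  · rintro (⟨hub, hva⟩ | ⟨hua, hvb⟩)
    · exact hpath.adj_of_adj_of_adj htri hab hub hva
    · exact (hpath.adj_of_adj_of_adj htri hab hvb hua).symm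

end IsCompleteBipartite

/-- A connected loopless graph on at least two vertices is
complete bipartite if and only if it contains no triangle and every path of
length 3 closes into a 4-cycle. -/
theorem stmt10 (V : Type) [Fintype V] (G : SimpleGraph V)
    (hcard : 2 ≤ Fintype.card V) (hconn : G.Connected) :
    IsCompleteBipartite G ↔
      ((¬ ∃ a b c : V, G.Adj a b ∧ G.Adj a c ∧ G.Adj b c) ∧
        ∀ v1 v2 v3 v4 : V, v1 ≠ v2 → v1 ≠ v3 → v1 ≠ v4 → v2 ≠ v3 → v2 ≠ v4 → v3 ≠ v4 →
          G.Adj v1 v2 → G.Adj v2 v3 → G.Adj v3 v4 → G.Adj v1 v4) := by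
  refine ⟨fun h ↦ ⟨h.not_exists_triangle, h.closesPathsOfLengthThree⟩, fun ⟨htri, hpath⟩ ↦ ?_⟩
  have : Nontrivial V := Fintype.one_lt_card_iff_nontrivial.mp hcard
  obtain ⟨a, hab⟩ := hconn.preconnected.exists_adj_of_nontrivial (Classical.arbitrary V)
  exact .of_adj hconn htri hpath hab
end

section
/- Let A be an m×m real positive semidefinite matrix and B ∈ ℝ^{m×p}, and suppose there exists a symmetric C ∈ S^p such that the block matrix [A, B; Bᵀ, C] is positive semidefinite. Then: (i) every X ∈ S^p for which [A, B; Bᵀ, X] is positive semidefinite satisfies rank([A, B; Bᵀ, X]) ≥ rank(A); and (ii) there exists X ∈ S^p (namely X = Bᵀ A† B, where A† is the Moore–Penrose pseudoinverse of A) such that [A, B; Bᵀ, X] is positive semidefinite and rank([A, B; Bᵀ, X]) = rank(A). Hence the minimum rank over all PSD completions of [A, B; Bᵀ, ?] equals rank(A). -/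
/-!
If `[A, B; Bᴴ, D]` is positive semidefinite then `ker A ⊆ ker Bᴴ`: when `A x = 0` the quadratic
form vanishes at `(x, 0)`, so `(x, 0)` lies in the kernel of the block matrix. Hence the columns
of `B` lie in the range of `A`, and `A P B = B` for every generalized inverse `P` of `A`. Then
`[A, B; Bᴴ, Bᴴ P B] = [1, P B]ᴴ A [1, P B]` is positive semidefinite of rank at most `rank A`,
while every completion has `A` as a principal submatrix, hence rank at least `rank A`.
-/

open Matrix
open scoped ComplexOrder

/-- `A'` is the Moore–Penrose pseudoinverse of `A` (the four Penrose
equations). -/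
def IsMoorePenroseInv {m : ℕ} (A A' : Matrix (Fin m) (Fin m) ℝ) : Prop :=
  A * A' * A = A ∧ A' * A * A' = A' ∧ (A * A')ᵀ = A * A' ∧ (A' * A)ᵀ = A' * A

namespace Matrix

variable {m n k : Type*}

theorem rank_le_rank_fromBlocks {R : Type*} [CommRing R] [StrongRankCondition R]
    {p n₁ n₂ : Type*} [Fintype n₁] [Fintype n₂]
    (A : Matrix m n₁ R) (B : Matrix m n₂ R) (C : Matrix p n₁ R) (D : Matrix p n₂ R) :
    A.rank ≤ (fromBlocks A B C D).rank :=
  rank_submatrix_le (fromBlocks A B C D) Sum.inl Sum.inl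

theorem fromBlocks_eq_conjTranspose_mul_mul_fromCols {α : Type*} [Semiring α] [StarRing α]
    [Fintype m] [DecidableEq m] {A : Matrix m m α} (hA : Aᴴ = A) (Q : Matrix m n α) :
    fromBlocks A (A * Q) (A * Q)ᴴ (Qᴴ * A * Q) = (fromCols 1 Q)ᴴ * A * fromCols 1 Q := by
  rw [conjTranspose_fromCols_eq_fromRows_conjTranspose, fromRows_mul, fromRows_mul_fromCols]
  simp [conjTranspose_mul, hA, Matrix.mul_assoc]

variable {𝕜 : Type*} [RCLike 𝕜] [Fintype m] [Fintype n]

open scoped MatrixOrder in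
theorem PosSemidef.mul_eq_zero_of_conjTranspose_mul_mul_eq_zero {M : Matrix n n 𝕜}
    (hM : M.PosSemidef) {N : Matrix n k 𝕜} (h : Nᴴ * M * N = 0) : M * N = 0 := by
  classical
  obtain ⟨Y, rfl⟩ := CStarAlgebra.nonneg_iff_eq_star_mul_self.mp hM.nonneg
  rw [star_eq_conjTranspose] at h ⊢
  rw [conjTranspose_mul_self_mul_eq_zero, ← conjTranspose_mul_self_eq_zero]
  simpa only [conjTranspose_mul, Matrix.mul_assoc] using h

theorem PosSemidef.conjTranspose_mul_eq_zero_of_fromBlocks {A : Matrix m m 𝕜} {B : Matrix m n 𝕜}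
    {D : Matrix n n 𝕜} (hM : (fromBlocks A B Bᴴ D).PosSemidef) {N : Matrix m k 𝕜}
    (hN : A * N = 0) : Bᴴ * N = 0 := by
  have hMN := hM.mul_eq_zero_of_conjTranspose_mul_mul_eq_zero (N := fromRows N 0) <| by
    simp [conjTranspose_fromRows_eq_fromCols_conjTranspose, fromBlocks_mul_fromRows,
      fromCols_mul_fromRows, hN, Matrix.mul_assoc]
  rw [fromBlocks_mul_fromRows, ← fromRows_zero, fromRows_ext_iff] at hMN
  simpa using hMN.2

variable [DecidableEq m]

theorem PosSemidef.mul_mul_eq_of_fromBlocks {A : Matrix m m 𝕜} {B : Matrix m n 𝕜}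
    {D : Matrix n n 𝕜} (hM : (fromBlocks A B Bᴴ D).PosSemidef) {P : Matrix m m 𝕜}
    (hP : A * P * A = A) : A * P * B = B := by
  have hA : Aᴴ = A := (isHermitian_fromBlocks_iff.mp hM.isHermitian).1
  have hker : A * (1 - A * P)ᴴ = 0 :=
    calc A * (1 - A * P)ᴴ = ((1 - A * P) * A)ᴴ := by rw [conjTranspose_mul, hA]
      _ = 0 := by rw [Matrix.sub_mul, Matrix.one_mul, hP, sub_self, conjTranspose_zero]
  have hB := hM.conjTranspose_mul_eq_zero_of_fromBlocks hker
  rw [← conjTranspose_mul, conjTranspose_eq_zero, Matrix.sub_mul, Matrix.one_mul,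
    sub_eq_zero] at hB
  exact hB.symm

theorem PosSemidef.fromBlocks_mul_mul_eq {A : Matrix m m 𝕜} {B : Matrix m n 𝕜}
    {D : Matrix n n 𝕜} (hM : (fromBlocks A B Bᴴ D).PosSemidef) {P : Matrix m m 𝕜}
    (hP : A * P * A = A) :
    fromBlocks A B Bᴴ (Bᴴ * P * B) = (fromCols 1 (P * B))ᴴ * A * fromCols 1 (P * B) := by
  have hA : Aᴴ = A := (isHermitian_fromBlocks_iff.mp hM.isHermitian).1
  have hB : A * (P * B) = B := by rw [← Matrix.mul_assoc]; exact hM.mul_mul_eq_of_fromBlocks hP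
  have hD : (P * B)ᴴ * A * (P * B) = Bᴴ * P * B :=
    calc (P * B)ᴴ * A * (P * B) = (A * (P * B))ᴴ * (P * B) := by rw [conjTranspose_mul A, hA]
      _ = Bᴴ * P * B := by rw [hB, Matrix.mul_assoc]
  have := fromBlocks_eq_conjTranspose_mul_mul_fromCols hA (P * B)
  rwa [hB, hD] at this

theorem PosSemidef.fromBlocks_mul_mul {A : Matrix m m 𝕜} {B : Matrix m n 𝕜}
    {D : Matrix n n 𝕜} (hM : (fromBlocks A B Bᴴ D).PosSemidef) {P : Matrix m m 𝕜}
    (hP : A * P * A = A) : (fromBlocks A B Bᴴ (Bᴴ * P * B)).PosSemidef := by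
  rw [hM.fromBlocks_mul_mul_eq hP]
  exact (hM.submatrix Sum.inl : A.PosSemidef).conjTranspose_mul_mul_same _

theorem PosSemidef.rank_fromBlocks_mul_mul {A : Matrix m m 𝕜} {B : Matrix m n 𝕜}
    {D : Matrix n n 𝕜} (hM : (fromBlocks A B Bᴴ D).PosSemidef) {P : Matrix m m 𝕜}
    (hP : A * P * A = A) : (fromBlocks A B Bᴴ (Bᴴ * P * B)).rank = A.rank := by
  refine le_antisymm ?_ (rank_le_rank_fromBlocks ..)
  rw [hM.fromBlocks_mul_mul_eq hP]
  exact (rank_mul_le_left _ _).trans (rank_mul_le_right _ _)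

end Matrix

theorem exists_isMoorePenroseInv {m : ℕ} {A : Matrix (Fin m) (Fin m) ℝ} (hA : A.IsHermitian) :
    ∃ P, IsMoorePenroseInv A P := by
  have hcont (f : ℝ → ℝ) : ContinuousOn f (spectrum ℝ A) := A.finite_real_spectrum.continuousOn f
  have hmul (f g : ℝ → ℝ) : cfc f A * cfc g A = cfc (fun x => f x * g x) A :=
    (cfc_mul f g A (hcont f) (hcont g)).symm
  have hid : cfc id A = A := cfc_id ℝ A hA
  have hmul_self (f : ℝ → ℝ) : cfc f A * A = cfc (fun x => f x * x) A := by
    simpa only [hid, id] using hmul f id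
  have hself_mul (f : ℝ → ℝ) : A * cfc f A = cfc (fun x => x * f x) A := by
    simpa only [hid, id] using hmul id f
  have hsymm (f : ℝ → ℝ) : (cfc f A)ᵀ = cfc f A := by
    rw [← conjTranspose_eq_transpose_of_trivial]; exact cfc_predicate f A
  -- Inverting the eigenvalues, with `0⁻¹ = 0`, gives the pseudoinverse.
  refine ⟨cfc (fun x : ℝ => x⁻¹) A, ?_, ?_, ?_, ?_⟩
  · rw [hself_mul, hmul_self]
    exact (cfc_congr fun x _ => mul_inv_mul_cancel x).trans hid
  · rw [hmul_self, hmul]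
    exact cfc_congr fun x _ => by simpa using mul_inv_mul_cancel x⁻¹
  · rw [hself_mul]; exact hsymm _
  · rw [hmul_self]; exact hsymm _

/-- Let `A` be PSD and suppose `[A, B; Bᵀ, C]` is PSD for some
symmetric `C`.  Then (i) every PSD completion `[A, B; Bᵀ, X]` has rank at least
`rank A`; (ii) the choice `X = Bᵀ A† B` (with `A†` the Moore–Penrose
pseudoinverse of `A`) gives a PSD completion of rank exactly `rank A`; hence the
minimum rank over all PSD completions equals `rank A`. -/
theorem stmt14 (m p : ℕ) (A : Matrix (Fin m) (Fin m) ℝ) (hA : A.PosSemidef)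
    (B : Matrix (Fin m) (Fin p) ℝ)
    (hC : ∃ C : Matrix (Fin p) (Fin p) ℝ, Cᵀ = C ∧ (fromBlocks A B Bᵀ C).PosSemidef) :
    (∀ X : Matrix (Fin p) (Fin p) ℝ, Xᵀ = X → (fromBlocks A B Bᵀ X).PosSemidef →
        A.rank ≤ (fromBlocks A B Bᵀ X).rank) ∧
    (∀ Adag : Matrix (Fin m) (Fin m) ℝ, IsMoorePenroseInv A Adag →
        (fromBlocks A B Bᵀ (Bᵀ * Adag * B)).PosSemidef ∧
          (fromBlocks A B Bᵀ (Bᵀ * Adag * B)).rank = A.rank) ∧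
    IsLeast {k : ℕ | ∃ X : Matrix (Fin p) (Fin p) ℝ, Xᵀ = X ∧
        (fromBlocks A B Bᵀ X).PosSemidef ∧ (fromBlocks A B Bᵀ X).rank = k}
      A.rank := by
  obtain ⟨C, -, hM⟩ := hC
  simp only [← conjTranspose_eq_transpose_of_trivial] at hM ⊢
  have hle (X : Matrix (Fin p) (Fin p) ℝ) : A.rank ≤ (fromBlocks A B Bᴴ X).rank :=
    rank_le_rank_fromBlocks ..
  refine ⟨fun X _ _ => hle X,
    fun P hP => ⟨hM.fromBlocks_mul_mul hP.1, hM.rank_fromBlocks_mul_mul hP.1⟩,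
    ?_, fun k ⟨X, _, _, hk⟩ => hk ▸ hle X⟩
  obtain ⟨P, hP⟩ := exists_isMoorePenroseInv hA.1
  have hpsd := hM.fromBlocks_mul_mul hP.1
  exact ⟨_, (isHermitian_fromBlocks_iff.mp hpsd.isHermitian).2.2.2, hpsd,
    hM.rank_fromBlocks_mul_mul hP.1⟩
end
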